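/- For the semicircular density ρ_sc(x) = (1/2π)√(4 - x²) on [-2,2], the principal-value Hilbert-type integral satisfies P.V. ∫_{-2}^{2} ρ_sc(y)/(x - y) dy = x/2 for every x ∈ [-2, 2]. -/

import Mathlib

open MeasureTheory Filter

/-- The semicircular probability density on `[-2, 2]`. -/
noncomputable def semicircle (x : ℝ) : ℝ := (1 / (2 * Real.pi)) * Real.sqrt (4 - x ^ 2)


noncomputable def Fsc (x y : ℝ) : ℝ :=
  x * Real.arcsin (y / 2) - Real.sqrt (4 - y ^ 2) +
    Real.sqrt (4 - x ^ 2) *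
      (Real.log (4 - x * y + Real.sqrt (4 - x ^ 2) * Real.sqrt (4 - y ^ 2)) - Real.log |x - y|)

lemma sq_lt_of_mem_Ioo {y : ℝ} (hy : y ∈ Set.Ioo (-2:ℝ) 2) : 0 < 4 - y ^ 2 := by
  nlinarith [hy.1, hy.2]

lemma Npos {x y : ℝ} (hx : -2 < x) (hx' : x < 2) (hy : y ∈ Set.Icc (-2:ℝ) 2) :
    0 < 4 - x * y + Real.sqrt (4 - x ^ 2) * Real.sqrt (4 - y ^ 2) := by
  have h1 : 0 < 4 - x * y := by
    nlinarith [sq_nonneg (x - y), mul_pos (show (0:ℝ) < 2 - x by linarith) (show (0:ℝ) < 2 + x by linarith),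
      mul_nonneg (show (0:ℝ) ≤ 2 - y by linarith [hy.2]) (show (0:ℝ) ≤ 2 + y by linarith [hy.1])]
  have h2 : (0:ℝ) ≤ Real.sqrt (4 - x ^ 2) * Real.sqrt (4 - y ^ 2) :=
    mul_nonneg (Real.sqrt_nonneg _) (Real.sqrt_nonneg _)
  linarith

lemma sqrt_four : Real.sqrt 4 = 2 := by
  rw [show (4:ℝ) = 2 ^ 2 by norm_num, Real.sqrt_sq (by norm_num : (0:ℝ) ≤ 2)]

lemma hasDerivAt_Fsc {x y : ℝ} (hx : x ∈ Set.Icc (-2:ℝ) 2) (hy : y ∈ Set.Ioo (-2:ℝ) 2)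
    (hxy : x ≠ y) : HasDerivAt (Fsc x) (Real.sqrt (4 - y ^ 2) / (x - y)) y := by
  have h4y : 0 < 4 - y ^ 2 := sq_lt_of_mem_Ioo hy
  have hq : 0 < Real.sqrt (4 - y ^ 2) := Real.sqrt_pos.2 h4y
  set q := Real.sqrt (4 - y ^ 2) with hqdef
  have hq2 : q ^ 2 = 4 - y ^ 2 := Real.sq_sqrt h4y.le
  have hxmy : x - y ≠ 0 := sub_ne_zero.2 hxy
  -- derivative of x * arcsin (y/2)
  have h1 : HasDerivAt (fun y : ℝ => x * Real.arcsin (y / 2)) (x / q) y := by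
    have hne1 : y / 2 ≠ -1 := by intro h; rw [div_eq_iff (by norm_num : (2:ℝ) ≠ 0)] at h; nlinarith [hy.1]
    have hne2 : y / 2 ≠ 1 := by intro h; rw [div_eq_iff (by norm_num : (2:ℝ) ≠ 0)] at h; nlinarith [hy.2]
    have ha := (Real.hasDerivAt_arcsin hne1 hne2).comp y ((hasDerivAt_id y).div_const 2)
    have hb := ha.const_mul x
    refine hb.congr_deriv ?_
    have hs : Real.sqrt (1 - (y / 2) ^ 2) = q / 2 := by
      rw [show (1 - (y/2)^2 : ℝ) = (4 - y^2) / 4 by ring, Real.sqrt_div h4y.le, sqrt_four]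
    rw [hs]
    field_simp
  -- derivative of sqrt (4 - y^2)
  have h2 : HasDerivAt (fun y : ℝ => Real.sqrt (4 - y ^ 2)) (-y / q) y := by
    have hb := (Real.hasDerivAt_sqrt (ne_of_gt h4y)).comp y
      (((hasDerivAt_id y).pow 2).const_sub 4)
    refine hb.congr_deriv ?_
    field_simp [hqdef]
    simp [hqdef]
  set s := Real.sqrt (4 - x ^ 2) with hsdef
  rcases eq_or_ne s 0 with hs | hs
  · -- boundary case x = ±2
    have hx2 : x ^ 2 = 4 := by
      have h0 : 4 - x ^ 2 ≤ 0 := by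
        by_contra h
        exact (Real.sqrt_pos.2 (lt_of_not_ge h)).ne' hs
      nlinarith [hx.1, hx.2]
    have hF : Fsc x = fun y : ℝ => x * Real.arcsin (y / 2) - Real.sqrt (4 - y ^ 2) := by
      funext t; simp [Fsc, ← hsdef, hs]
    rw [hF]
    refine (h1.sub h2).congr_deriv ?_
    field_simp
    linear_combination hx2 - hq2
  · have hs2pos : 0 < 4 - x ^ 2 := by
      by_contra h
      push_neg at h
      exact hs (by rw [hsdef]; exact Real.sqrt_eq_zero_of_nonpos (by linarith))
    have hs2 : s ^ 2 = 4 - x ^ 2 := Real.sq_sqrt hs2pos.le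
    have hxlt : -2 < x ∧ x < 2 := ⟨by nlinarith, by nlinarith⟩
    have hN : 0 < 4 - x * y + s * q := by
      rw [hsdef, hqdef]; exact Npos hxlt.1 hxlt.2 (Set.Ioo_subset_Icc_self hy)
    have h3 : HasDerivAt (fun t : ℝ => Real.log (4 - x * t + s * Real.sqrt (4 - t ^ 2)))
        ((-x + s * (-y / q)) / (4 - x * y + s * q)) y := by
      have ha : HasDerivAt (fun t : ℝ => 4 - x * t) (-x) y := by
        simpa using ((hasDerivAt_id y).const_mul x).const_sub 4
      exact (ha.add (h2.const_mul s)).log (ne_of_gt hN)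
    have h4 : HasDerivAt (fun t : ℝ => Real.log |x - t|) (-1 / (x - y)) y := by
      have he : (fun t : ℝ => Real.log |x - t|) = fun t : ℝ => Real.log (x - t) := by
        funext t; rw [Real.log_abs]
      rw [he]
      have hinner : HasDerivAt (fun t : ℝ => x - t) (-1) y := by
        exact (hasDerivAt_id' y).const_sub x
      have hl := hinner.log hxmy
      convert hl using 1
    have hcomb := (h1.sub h2).add ((h3.sub h4).const_mul s)
    have hF : Fsc x = fun t : ℝ => x * Real.arcsin (t / 2) - Real.sqrt (4 - t ^ 2) +
        s * (Real.log (4 - x * t + s * Real.sqrt (4 - t ^ 2)) - Real.log |x - t|) := by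
      funext t; rw [Fsc, hsdef]
    rw [hF]
    refine hcomb.congr_deriv ?_
    have hNne : (4 - x * y + s * q) ≠ 0 := ne_of_gt hN
    have hNne' : 4 - x * y + q * s ≠ 0 := by rw [mul_comm q s]; exact hNne
    field_simp
    linear_combination (-q*s - x*(x-y)) * hq2 + (q^2 - x*y + y^2) * hs2

lemma continuousOn_integrand {x a b : ℝ} (hxab : x ∉ Set.Icc a b) :
    ContinuousOn (fun y : ℝ => Real.sqrt (4 - y ^ 2) / (x - y)) (Set.Icc a b) := by
  apply ContinuousOn.div
  · exact (Real.continuous_sqrt.comp (by continuity)).continuousOn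
  · exact (continuous_const.sub continuous_id).continuousOn
  · intro y hy
    exact sub_ne_zero.2 (fun h => hxab (h ▸ hy))

lemma continuousOn_Fsc {x a b : ℝ} (hx : x ∈ Set.Icc (-2:ℝ) 2) (ha : -2 ≤ a) (hb : b ≤ 2)
    (hxab : x ∉ Set.Icc a b) : ContinuousOn (Fsc x) (Set.Icc a b) := by
  have hc1 : Continuous fun y : ℝ => x * Real.arcsin (y / 2) :=
    continuous_const.mul (Real.continuous_arcsin.comp (continuous_id.div_const 2))
  have hc2 : Continuous fun y : ℝ => Real.sqrt (4 - y ^ 2) :=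
    Real.continuous_sqrt.comp (by continuity)
  rcases eq_or_ne (Real.sqrt (4 - x ^ 2)) 0 with hs | hs
  · have hF : Fsc x = fun y : ℝ => x * Real.arcsin (y / 2) - Real.sqrt (4 - y ^ 2) := by
      funext t; simp [Fsc, hs]
    rw [hF]
    exact (hc1.sub hc2).continuousOn
  · have hs2pos : 0 < 4 - x ^ 2 := by
      by_contra h
      push_neg at h
      exact hs (Real.sqrt_eq_zero_of_nonpos (by linarith))
    have hxlt1 : -2 < x := by nlinarith
    have hxlt2 : x < 2 := by nlinarith
    apply ((hc1.continuousOn).sub (hc2.continuousOn)).add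
    apply ContinuousOn.mul continuousOn_const
    apply ContinuousOn.sub
    · apply ContinuousOn.log
      · exact ((continuous_const.sub (continuous_const.mul continuous_id)).add
          (continuous_const.mul hc2)).continuousOn
      · intro y hy
        exact ne_of_gt (Npos hxlt1 hxlt2 (Set.Icc_subset_Icc ha hb hy))
    · apply ContinuousOn.log
      · exact (continuous_const.sub continuous_id).abs.continuousOn
      · intro y hy
        simp only [abs_ne_zero]
        exact sub_ne_zero.2 (fun h => hxab (h ▸ hy))

lemma ftc_Fsc {x a b : ℝ} (hx : x ∈ Set.Icc (-2:ℝ) 2) (ha : -2 ≤ a) (hab : a ≤ b) (hb : b ≤ 2)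
    (hxab : x ∉ Set.Icc a b) :
    ∫ y in Set.Icc a b, Real.sqrt (4 - y ^ 2) / (x - y) = Fsc x b - Fsc x a := by
  rw [MeasureTheory.integral_Icc_eq_integral_Ioc, ← intervalIntegral.integral_of_le hab]
  apply intervalIntegral.integral_eq_sub_of_hasDeriv_right_of_le hab
    (continuousOn_Fsc hx ha hb hxab)
  · intro y hy
    have hy' : y ∈ Set.Ioo (-2:ℝ) 2 := ⟨lt_of_le_of_lt ha hy.1, lt_of_lt_of_le hy.2 hb⟩
    have hxy : x ≠ y := fun h => hxab (h ▸ ⟨hy.1.le, hy.2.le⟩)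
    exact (hasDerivAt_Fsc hx hy' hxy).hasDerivWithinAt
  · apply ContinuousOn.intervalIntegrable
    rw [Set.uIcc_of_le hab]
    exact continuousOn_integrand hxab

lemma Ssplit {x ε : ℝ} (hx : x ∈ Set.Icc (-2:ℝ) 2) (hε : 0 < ε) :
    {y ∈ Set.Icc (-2:ℝ) 2 | ε ≤ |x - y|}
      = Set.Icc (-2:ℝ) (x - ε) ∪ Set.Icc (x + ε) 2 := by
  ext y
  simp only [Set.mem_setOf_eq, Set.mem_Icc, Set.mem_union, le_abs, le_sub_iff_add_le, neg_sub]
  constructor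
  · rintro ⟨⟨h1, h2⟩, h3 | h3⟩
    · left; constructor <;> linarith
    · right; constructor <;> linarith
  · rintro (⟨h1, h2⟩ | ⟨h1, h2⟩)
    · exact ⟨⟨h1, by linarith [hx.2]⟩, Or.inl (by linarith)⟩
    · exact ⟨⟨by linarith [hx.1], h2⟩, Or.inr (by linarith)⟩

lemma Ival {x : ℝ} (hx : x ∈ Set.Icc (-2:ℝ) 2) {ε : ℝ} (hε : 0 < ε) :
    ∫ y in {y ∈ Set.Icc (-2:ℝ) 2 | ε ≤ |x - y|}, semicircle y / (x - y)
      = (1 / (2 * Real.pi)) * ((Fsc x (max (x - ε) (-2)) - Fsc x (-2)) +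
          (Fsc x 2 - Fsc x (min (x + ε) 2))) := by
  have hfun : (fun y : ℝ => semicircle y / (x - y))
      = fun y : ℝ => (1 / (2 * Real.pi)) * (Real.sqrt (4 - y ^ 2) / (x - y)) := by
    funext y; rw [semicircle, mul_div_assoc]
  have hx1 : x ∉ Set.Icc (-2:ℝ) (x - ε) := fun h => by linarith [h.2]
  have hx2 : x ∉ Set.Icc (x + ε) (2:ℝ) := fun h => by linarith [h.1]
  have hint1 : IntegrableOn (fun y : ℝ => semicircle y / (x - y)) (Set.Icc (-2:ℝ) (x - ε)) := by
    rw [hfun]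
    exact (continuousOn_const.mul (continuousOn_integrand hx1)).integrableOn_Icc
  have hint2 : IntegrableOn (fun y : ℝ => semicircle y / (x - y)) (Set.Icc (x + ε) (2:ℝ)) := by
    rw [hfun]
    exact (continuousOn_const.mul (continuousOn_integrand hx2)).integrableOn_Icc
  have hdisj : Disjoint (Set.Icc (-2:ℝ) (x - ε)) (Set.Icc (x + ε) (2:ℝ)) := by
    apply Set.disjoint_left.2
    rintro y ⟨_, h1⟩ ⟨h2, _⟩
    linarith
  rw [Ssplit hx hε, MeasureTheory.setIntegral_union hdisj measurableSet_Icc hint1 hint2, hfun]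
  have e1 : ∫ y in Set.Icc (-2:ℝ) (x - ε), (1 / (2 * Real.pi)) * (Real.sqrt (4 - y ^ 2) / (x - y))
      = (1 / (2 * Real.pi)) * (Fsc x (max (x - ε) (-2)) - Fsc x (-2)) := by
    rw [MeasureTheory.integral_const_mul]
    rcases le_or_gt (-2:ℝ) (x - ε) with h | h
    · rw [max_eq_left h, ftc_Fsc hx le_rfl h (by linarith [hx.2]) hx1]
    · rw [max_eq_right h.le, Set.Icc_eq_empty (not_le.2 h), MeasureTheory.setIntegral_empty]
      simp
  have e2 : ∫ y in Set.Icc (x + ε) (2:ℝ), (1 / (2 * Real.pi)) * (Real.sqrt (4 - y ^ 2) / (x - y))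
      = (1 / (2 * Real.pi)) * (Fsc x 2 - Fsc x (min (x + ε) 2)) := by
    rw [MeasureTheory.integral_const_mul]
    rcases le_or_gt (x + ε) (2:ℝ) with h | h
    · rw [min_eq_left h, ftc_Fsc hx (by linarith [hx.1]) h le_rfl hx2]
    · rw [min_eq_right h.le, Set.Icc_eq_empty (not_le.2 h), MeasureTheory.setIntegral_empty]
      simp
  rw [e1, e2]
  ring

lemma sqrt_two_sq : Real.sqrt (4 - (2:ℝ) ^ 2) = 0 := by
  rw [show (4 - (2:ℝ) ^ 2) = 0 by norm_num, Real.sqrt_zero]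

lemma sqrt_neg_two_sq : Real.sqrt (4 - (-2:ℝ) ^ 2) = 0 := by
  rw [show (4 - (-2:ℝ) ^ 2) = 0 by norm_num, Real.sqrt_zero]

lemma Fsc_endpoints {x : ℝ} (h1 : -2 < x) (h2 : x < 2) :
    Fsc x 2 - Fsc x (-2) = x * Real.pi := by
  have l2 : |x - 2| = 2 - x := by rw [abs_of_neg (by linarith), neg_sub]
  have l2' : |x - (-2)| = x + 2 := by
    rw [show x - (-2) = x + 2 by ring, abs_of_pos (by linarith)]
  have la : Real.log (4 - x * 2 + Real.sqrt (4 - x ^ 2) * Real.sqrt (4 - (2:ℝ) ^ 2))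
      = Real.log 2 + Real.log (2 - x) := by
    rw [sqrt_two_sq, mul_zero, add_zero, show (4 - x * 2 : ℝ) = 2 * (2 - x) by ring,
      Real.log_mul two_ne_zero (ne_of_gt (by linarith))]
  have lb : Real.log (4 - x * (-2) + Real.sqrt (4 - x ^ 2) * Real.sqrt (4 - (-2:ℝ) ^ 2))
      = Real.log 2 + Real.log (x + 2) := by
    rw [sqrt_neg_two_sq, mul_zero, add_zero, show (4 - x * (-2) : ℝ) = 2 * (x + 2) by ring,
      Real.log_mul two_ne_zero (ne_of_gt (by linarith))]
  simp only [Fsc]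
  rw [la, lb, l2, l2', sqrt_two_sq, sqrt_neg_two_sq,
    show ((2:ℝ)/2) = 1 by norm_num, show ((-2:ℝ)/2) = -1 by norm_num,
    Real.arcsin_one, Real.arcsin_neg_one]
  ring

noncomputable def Hsc (x t : ℝ) : ℝ :=
  x * Real.arcsin (t / 2) - Real.sqrt (4 - t ^ 2) +
    Real.sqrt (4 - x ^ 2) *
      Real.log (4 - x * t + Real.sqrt (4 - x ^ 2) * Real.sqrt (4 - t ^ 2))

lemma Fsc_symm_diff (x ε : ℝ) :
    Fsc x (x - ε) - Fsc x (x + ε) = Hsc x (x - ε) - Hsc x (x + ε) := by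
  have e1 : x - (x - ε) = ε := by ring
  have e2 : x - (x + ε) = -ε := by ring
  simp only [Fsc, Hsc, e1, e2, abs_neg]
  ring

lemma continuousAt_Hsc {x : ℝ} (h1 : -2 < x) (h2 : x < 2) : ContinuousAt (Hsc x) x := by
  have hc2 : Continuous fun t : ℝ => Real.sqrt (4 - t ^ 2) :=
    Real.continuous_sqrt.comp (by continuity)
  apply ContinuousAt.add
  · exact ((continuous_const.mul (Real.continuous_arcsin.comp
      (continuous_id.div_const 2))).sub hc2).continuousAt
  · apply ContinuousAt.mul continuousAt_const
    apply ContinuousAt.log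
    · exact ((continuous_const.sub (continuous_const.mul continuous_id)).add
        (continuous_const.mul hc2)).continuousAt
    · exact ne_of_gt (Npos h1 h2 ⟨h1.le, h2.le⟩)


/-- Principal value identity on the support of the semicircle law:
`P.V. ∫_{-2}^{2} ρ_sc(y)/(x-y) dy = x/2` for every `x ∈ [-2,2]`, where the
principal value is the limit of integrals with an `ε`-neighbourhood of the
singularity removed. -/
theorem semicircle_principal_value (x : ℝ) (hx : x ∈ Set.Icc (-2 : ℝ) 2) :
    Tendsto
      (fun ε : ℝ =>
        ∫ y in {y ∈ Set.Icc (-2 : ℝ) 2 | ε ≤ |x - y|}, semicircle y / (x - y))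
      (nhdsWithin 0 (Set.Ioi 0)) (nhds (x / 2)) := by
  have hπ : Real.pi ≠ 0 := Real.pi_ne_zero
  apply Tendsto.congr' (Filter.eventuallyEq_of_mem self_mem_nhdsWithin
    (fun ε (hε : ε ∈ Set.Ioi (0:ℝ)) => (Ival hx hε).symm))
  rcases eq_or_ne (Real.sqrt (4 - x ^ 2)) 0 with hs | hs
  · -- boundary case x = ±2
    have hF : Fsc x = fun y : ℝ => x * Real.arcsin (y / 2) - Real.sqrt (4 - y ^ 2) := by
      funext t; simp [Fsc, hs]
    have hFc : Continuous (Fsc x) := by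
      rw [hF]
      exact (continuous_const.mul (Real.continuous_arcsin.comp
        (continuous_id.div_const 2))).sub (Real.continuous_sqrt.comp (by continuity))
    have hmax : Tendsto (fun ε : ℝ => max (x - ε) (-2)) (nhdsWithin 0 (Set.Ioi 0)) (nhds x) := by
      have hc : Continuous fun ε : ℝ => max (x - ε) (-2:ℝ) :=
        (continuous_const.sub continuous_id).max continuous_const
      have h0 := (hc.tendsto 0).mono_left (nhdsWithin_le_nhds (s := Set.Ioi (0:ℝ)))
      simpa [max_eq_left hx.1] using h0
    have hmin : Tendsto (fun ε : ℝ => min (x + ε) 2) (nhdsWithin 0 (Set.Ioi 0)) (nhds x) := by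
      have hc : Continuous fun ε : ℝ => min (x + ε) (2:ℝ) :=
        (continuous_const.add continuous_id).min continuous_const
      have h0 := (hc.tendsto 0).mono_left (nhdsWithin_le_nhds (s := Set.Ioi (0:ℝ)))
      simpa [min_eq_left hx.2] using h0
    have hg : Tendsto (fun ε : ℝ => (1 / (2 * Real.pi)) *
        ((Fsc x (max (x - ε) (-2)) - Fsc x (-2)) + (Fsc x 2 - Fsc x (min (x + ε) 2))))
        (nhdsWithin 0 (Set.Ioi 0))
        (nhds ((1 / (2 * Real.pi)) * ((Fsc x x - Fsc x (-2)) + (Fsc x 2 - Fsc x x)))) := by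
      apply Tendsto.const_mul
      exact ((hFc.continuousAt.tendsto.comp hmax).sub tendsto_const_nhds).add
        (tendsto_const_nhds.sub (hFc.continuousAt.tendsto.comp hmin))
    have v2 : Fsc x 2 = x * (Real.pi / 2) := by
      rw [hF]
      simp only
      rw [show ((2:ℝ)/2) = 1 by norm_num, Real.arcsin_one, sqrt_two_sq]
      ring
    have vm2 : Fsc x (-2) = -(x * (Real.pi / 2)) := by
      rw [hF]
      simp only
      rw [show ((-2:ℝ)/2) = -1 by norm_num, Real.arcsin_neg_one, sqrt_neg_two_sq]
      ring
    have hval : (1 / (2 * Real.pi)) * ((Fsc x x - Fsc x (-2)) + (Fsc x 2 - Fsc x x)) = x / 2 := by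
      rw [v2, vm2]
      field_simp
      ring
    rwa [hval] at hg
  · -- interior case
    have hs2pos : 0 < 4 - x ^ 2 := by
      by_contra h
      push_neg at h
      exact hs (Real.sqrt_eq_zero_of_nonpos (by linarith))
    have h1 : -2 < x := by nlinarith
    have h2 : x < 2 := by nlinarith
    have hδ : 0 < min (x + 2) (2 - x) := lt_min (by linarith) (by linarith)
    have hH := continuousAt_Hsc h1 h2
    have hsub : Tendsto (fun ε : ℝ => x - ε) (nhdsWithin 0 (Set.Ioi 0)) (nhds x) := by
      have hc : Continuous fun ε : ℝ => x - ε := continuous_const.sub continuous_id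
      have h0 := (hc.tendsto 0).mono_left (nhdsWithin_le_nhds (s := Set.Ioi (0:ℝ)))
      simpa using h0
    have hadd : Tendsto (fun ε : ℝ => x + ε) (nhdsWithin 0 (Set.Ioi 0)) (nhds x) := by
      have hc : Continuous fun ε : ℝ => x + ε := continuous_const.add continuous_id
      have h0 := (hc.tendsto 0).mono_left (nhdsWithin_le_nhds (s := Set.Ioi (0:ℝ)))
      simpa using h0
    have hg : Tendsto (fun ε : ℝ => (1 / (2 * Real.pi)) *
        ((Hsc x (x - ε) - Hsc x (x + ε)) + x * Real.pi))
        (nhdsWithin 0 (Set.Ioi 0))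
        (nhds ((1 / (2 * Real.pi)) * ((Hsc x x - Hsc x x) + x * Real.pi))) := by
      apply Tendsto.const_mul
      exact ((hH.tendsto.comp hsub).sub (hH.tendsto.comp hadd)).add tendsto_const_nhds
    have hval : (1 / (2 * Real.pi)) * ((Hsc x x - Hsc x x) + x * Real.pi) = x / 2 := by
      field_simp
      ring
    rw [hval] at hg
    apply Tendsto.congr' _ hg
    apply Filter.eventuallyEq_of_mem (Ioo_mem_nhdsGT_of_mem ⟨le_refl (0:ℝ), hδ⟩)
    intro ε hε
    have hε1 : -2 ≤ x - ε := by
      have := hε.2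
      have := lt_min_iff.1 (hε.2)
      linarith [hε.2, (lt_min_iff.1 hε.2).1]
    have hε2 : x + ε ≤ 2 := by
      linarith [(lt_min_iff.1 hε.2).2]
    simp only [max_eq_left hε1, min_eq_left hε2]
    have := Fsc_symm_diff x ε
    have he := Fsc_endpoints h1 h2
    have : (Fsc x (x - ε) - Fsc x (-2)) + (Fsc x 2 - Fsc x (x + ε))
        = (Hsc x (x - ε) - Hsc x (x + ε)) + x * Real.pi := by
      rw [← he, ← Fsc_symm_diff x ε]; ring
    rw [this]
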